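/- arXiv:0706.2595 — 2 statements merged into one kernel-verified Lean document; each statement's English description precedes it below -/
import Mathlib

section
/- Let n ≥ 1 and let X, B be n×n real matrices. Then the map s ↦ exp(X + s·(XB − BX)) from ℝ to M_n(ℝ) (matrix exponential) is differentiable at s = 0, with derivative exp(X)·( B − exp(−X)·B·exp(X) ). -/
attribute [local instance] Matrix.linftyOpNormedAddCommGroup Matrix.linftyOpNormedRing
  Matrix.linftyOpNormedAlgebra

/-!
Conjugating by `exp (s • b)` and differentiating at `s = 0` turns `a` into `a * b - b * a`.
Since `exp` commutes with conjugation, differentiating `exp (exp (-(s • b)) * a * exp (s • b))`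
in two ways shows that the differential of `exp` at `a` sends the commutator `a * b - b * a`
to `exp a * b - b * exp a = exp a * (b - exp (-a) * b * exp a)`.
-/

open NormedSpace

theorem NormedSpace.exp_exp_neg_mul_mul_exp {𝔸 : Type*} [NormedRing 𝔸] [NormedAlgebra ℚ 𝔸]
    [CompleteSpace 𝔸] (a b : 𝔸) :
    exp (exp (-b) * a * exp b) = exp (-b) * exp a * exp b := by
  let := invertibleExp b
  simpa only [val_inv_unitOfInvertible, val_unitOfInvertible, invOf_exp] using
    exp_units_conj' (unitOfInvertible (exp b)) a

section RCLike

variable {𝕂 𝔸 : Type*} [RCLike 𝕂] [NormedRing 𝔸] [NormedAlgebra 𝕂 𝔸] [CompleteSpace 𝔸]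

theorem hasDerivAt_exp_neg_smul_mul_mul_exp_smul (a b : 𝔸) :
    HasDerivAt (fun s : 𝕂 => exp (-(s • b)) * a * exp (s • b)) (a * b - b * a) 0 := by
  have hpos : HasDerivAt (fun s : 𝕂 => exp (s • b)) b 0 := by
    simpa using hasDerivAt_exp_smul_const b (0 : 𝕂)
  have hneg : HasDerivAt (fun s : 𝕂 => exp (-(s • b))) (-b) 0 := by
    simpa [smul_neg] using hasDerivAt_exp_smul_const (-b) (0 : 𝕂)
  refine ((hneg.mul_const a).mul hpos).congr_deriv ?_
  simp [sub_eq_neg_add]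

theorem fderiv_exp_commutator (a b : 𝔸) :
    fderiv 𝕂 exp a (a * b - b * a) = exp a * b - b * exp a := by
  let +nondep : NormedAlgebra ℚ 𝔸 := .restrictScalars ℚ 𝕂 𝔸
  have hchain : HasDerivAt (fun s : 𝕂 => exp (exp (-(s • b)) * a * exp (s • b)))
      (fderiv 𝕂 exp a (a * b - b * a)) 0 :=
    (exp_analytic (𝕂 := 𝕂) a).differentiableAt.hasFDerivAt.comp_hasDerivAt_of_eq 0
      (hasDerivAt_exp_neg_smul_mul_mul_exp_smul a b) (by simp)
  have hconj : HasDerivAt (fun s : 𝕂 => exp (exp (-(s • b)) * a * exp (s • b)))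
      (exp a * b - b * exp a) 0 := by
    simpa only [exp_exp_neg_mul_mul_exp] using
      hasDerivAt_exp_neg_smul_mul_mul_exp_smul (exp a) b
  exact hchain.unique hconj

theorem hasDerivAt_exp_add_smul_commutator (a b : 𝔸) :
    HasDerivAt (fun s : 𝕂 => exp (a + s • (a * b - b * a)))
      (exp a * (b - exp (-a) * b * exp a)) 0 := by
  let +nondep : NormedAlgebra ℚ 𝔸 := .restrictScalars ℚ 𝕂 𝔸
  have hline : HasDerivAt (fun s : 𝕂 => a + s • (a * b - b * a)) (a * b - b * a) 0 := by
    simpa using ((hasDerivAt_id (0 : 𝕂)).smul_const (a * b - b * a)).const_add a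
  have hexp : exp a * (b - exp (-a) * b * exp a) = exp a * b - b * exp a := by
    rw [mul_sub, ← mul_assoc, ← mul_assoc, ← exp_add_of_commute (Commute.refl a).neg_right,
      add_neg_cancel, exp_zero, one_mul]
  rw [hexp, ← fderiv_exp_commutator (𝕂 := 𝕂)]
  exact (exp_analytic (𝕂 := 𝕂) a).differentiableAt.hasFDerivAt.comp_hasDerivAt_of_eq 0 hline
    (by simp)

end RCLike

theorem hasDerivAt_exp_bracket_direction_general
    (n : ℕ) (X B : Matrix (Fin n) (Fin n) ℝ) :
    HasDerivAt (fun s : ℝ => NormedSpace.exp (X + s • (X * B - B * X)))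
      (NormedSpace.exp X
        * (B - NormedSpace.exp (-X) * B * NormedSpace.exp X))
      0 :=
  hasDerivAt_exp_add_smul_commutator X B

/-- Equation (36) of Appendix B §5.3 of the paper, for matrices: the map
`s ↦ exp(X + s·[X,B])` has derivative `exp(X)·(B - e^{-X}·B·e^{X})` at `s = 0`;
i.e. `exp(X + ε[X,B]) = exp(X)·exp(ε(1 - e^{-ad X})B)` to first order in `ε`. -/
theorem hasDerivAt_exp_bracket_direction
    (n : ℕ) (hn : 1 ≤ n) (X B : Matrix (Fin n) (Fin n) ℝ) :
    HasDerivAt (fun s : ℝ => NormedSpace.exp (X + s • (X * B - B * X)))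
      (NormedSpace.exp X
        * (B - NormedSpace.exp (-X) * B * NormedSpace.exp X))
      0 :=
  hasDerivAt_exp_bracket_direction_general n X B
end

section
/- Let X be a type, let R = FreeAlgebra ℚ X be the free associative ℚ-algebra on X with canonical embedding ι : X → R, equipped with the Lie bracket ⁅a,b⁆ = ab − ba, and let P ⊆ R be the ℚ-linear span of the image of ι. Suppose δ : R → R is a ℚ-linear map satisfying: δ(1) = 0; δ(ι(x)) = ι(x) for every x : X; and δ(ι(x)·w) = ι(x)·δ(w) − δ(w)·ι(x) for every x : X and every w belonging to ∑_{m≥1} P^m (the submodule sum of all positive powers of P, where P^m denotes the ℚ-span of products of m elements of P). Then for every integer n ≥ 1 and every w ∈ P^n: w belongs to the Lie subalgebra of R generated by the image of ι if and only if δ(w) = n·w. -/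
attribute [local instance 100] LieRing.ofAssociativeRing

/-!
Because `δ (x * w) = ⁅x, δ w⁆` for generators `x`, induction on Lie words gives
`δ (u * w) = ⁅u, δ w⁆` for every Lie element `u`. Two consequences: `δ` maps the positive
part into Lie elements (so `δ w = n • w` makes `w = n⁻¹ • δ w` a Lie element), and on Lie
elements `δ ⁅u, v⁆ = ⁅u, δ v⁆ + ⁅δ u, v⁆`. By the latter, `δ` agrees on Lie elements with the
Euler derivation fixing the generators, which multiplies elements of degree `n` by `n`.
-/

open DualNumber Submodule

namespace FreeAlgebra

variable {R X : Type*} [CommRing R]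

variable (R X) in
abbrev generatorSpan : Submodule R (FreeAlgebra R X) :=
  span R (Set.range (ι R))

variable (R X) in
abbrev positivePart : Submodule R (FreeAlgebra R X) :=
  ⨆ m : ℕ, generatorSpan R X ^ (m + 1)

variable (R X) in
abbrev lieElements : LieSubalgebra R (FreeAlgebra R X) :=
  LieSubalgebra.lieSpan R _ (Set.range (ι R))

theorem ι_mem_generatorSpan (x : X) : ι R x ∈ generatorSpan R X :=
  subset_span ⟨x, rfl⟩

theorem map_eq_self_of_mem_generatorSpan {f : FreeAlgebra R X →ₗ[R] FreeAlgebra R X}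
    (hf : ∀ x : X, f (ι R x) = ι R x) {p : FreeAlgebra R X} (hp : p ∈ generatorSpan R X) :
    f p = p :=
  LinearMap.eqOn_span' (g := LinearMap.id) (by rintro _ ⟨x, rfl⟩; exact hf x) hp

theorem generatorSpan_le_lieElements :
    generatorSpan R X ≤ (lieElements R X).toSubmodule :=
  LieSubalgebra.submodule_span_le_lieSpan

theorem pow_le_positivePart {n : ℕ} (hn : n ≠ 0) :
    generatorSpan R X ^ n ≤ positivePart R X := by
  obtain ⟨m, rfl⟩ := Nat.exists_eq_succ_of_ne_zero hn
  exact le_iSup (fun m ↦ generatorSpan R X ^ (m + 1)) m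

theorem ι_mem_positivePart (x : X) : ι R x ∈ positivePart R X :=
  pow_le_positivePart one_ne_zero (by simpa using ι_mem_generatorSpan x)

theorem mul_mem_positivePart {a b : FreeAlgebra R X} (ha : a ∈ positivePart R X)
    (hb : b ∈ positivePart R X) : a * b ∈ positivePart R X := by
  have : positivePart R X * positivePart R X ≤ positivePart R X := by
    simp only [iSup_mul, mul_iSup, ← pow_add]
    exact iSup_le fun i ↦ iSup_le fun j ↦ pow_le_positivePart (by omega)
  exact this (mul_mem_mul ha hb)

theorem lieElements_le_positivePart :
    (lieElements R X).toSubmodule ≤ positivePart R X := by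
  intro u hu
  induction hu using LieSubalgebra.lieSpan_induction with
  | mem _ h => obtain ⟨x, rfl⟩ := h; exact ι_mem_positivePart x
  | zero => exact zero_mem _
  | add _ _ _ _ hu hv => exact add_mem hu hv
  | smul r _ _ hu => exact smul_mem _ r hu
  | lie u v _ _ hu hv =>
    rw [Ring.lie_def]
    exact sub_mem (mul_mem_positivePart hu hv) (mul_mem_positivePart hv hu)

/-- Its `ε`-part is the Euler derivation, `w ↦ n • w` on `generatorSpan R X ^ n`. -/
noncomputable def eulerHom : FreeAlgebra R X →ₐ[R] (FreeAlgebra R X)[ε] :=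
  lift R fun x ↦ TrivSqZeroExt.inl (ι R x) + TrivSqZeroExt.inr (ι R x)

theorem fst_eulerHom (w : FreeAlgebra R X) : (eulerHom w).fst = w := by
  have : (TrivSqZeroExt.fstHom R _ _).comp eulerHom = AlgHom.id R (FreeAlgebra R X) :=
    hom_ext <| funext fun x ↦ by simp [eulerHom]
  exact AlgHom.congr_fun this w

noncomputable def euler : FreeAlgebra R X →ₗ[R] FreeAlgebra R X where
  toFun w := (eulerHom w).snd
  map_add' a b := by simp
  map_smul' r a := by simp

theorem euler_ι (x : X) : euler (ι R x) = ι R x := by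
  simp [euler, eulerHom]

theorem euler_mul (a b : FreeAlgebra R X) : euler (a * b) = a * euler b + euler a * b := by
  simp only [euler, LinearMap.coe_mk, AddHom.coe_mk, map_mul, snd_mul, fst_eulerHom]

theorem euler_lie (a b : FreeAlgebra R X) :
    euler ⁅a, b⁆ = ⁅a, euler b⁆ + ⁅euler a, b⁆ := by
  simp only [Ring.lie_def, map_sub, euler_mul]
  abel

theorem euler_of_mem_pow {n : ℕ} {w : FreeAlgebra R X} (hw : w ∈ generatorSpan R X ^ n) :
    euler w = n • w := by
  induction hw using Submodule.pow_induction_on_left' with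
  | algebraMap r => simp [euler, TrivSqZeroExt.algebraMap_eq_inl']
  | add a b i _ _ ha hb => rw [map_add, ha, hb, smul_add]
  | mem_mul p hp i w _ hw =>
    rw [euler_mul, hw, map_eq_self_of_mem_generatorSpan euler_ι hp, mul_smul_comm, succ_nsmul]

variable (R X) in
def IsLeftBracketing (δ : FreeAlgebra R X →ₗ[R] FreeAlgebra R X) : Prop :=
  ∀ x : X, ∀ w ∈ positivePart R X, δ (ι R x * w) = ι R x * δ w - δ w * ι R x

section

variable {δ : FreeAlgebra R X →ₗ[R] FreeAlgebra R X}

theorem map_mul_of_mem_lieElements (hδ_mul : IsLeftBracketing R X δ)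
    {u : FreeAlgebra R X} (hu : u ∈ lieElements R X) :
    ∀ w ∈ positivePart R X, δ (u * w) = u * δ w - δ w * u := by
  induction hu using LieSubalgebra.lieSpan_induction with
  | mem _ h => obtain ⟨x, rfl⟩ := h; exact hδ_mul x
  | zero => simp
  | add u v _ _ hu hv =>
    intro w hw
    rw [add_mul, map_add, hu w hw, hv w hw]
    noncomm_ring
  | smul r u _ hu =>
    intro w hw
    rw [smul_mul_assoc, map_smul, hu w hw, smul_sub, smul_mul_assoc, mul_smul_comm]
  | lie u v huL hvL hu hv =>
    intro w hw
    have hwu := mul_mem_positivePart (lieElements_le_positivePart huL) hw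
    have hwv := mul_mem_positivePart (lieElements_le_positivePart hvL) hw
    rw [Ring.lie_def, sub_mul, map_sub, mul_assoc, mul_assoc, hu _ hwv, hv _ hwu, hu w hw,
      hv w hw]
    noncomm_ring

theorem map_lie_of_mem_lieElements (hδ_mul : IsLeftBracketing R X δ)
    {u v : FreeAlgebra R X} (hu : u ∈ lieElements R X) (hv : v ∈ lieElements R X) :
    δ ⁅u, v⁆ = ⁅u, δ v⁆ + ⁅δ u, v⁆ := by
  rw [Ring.lie_def, map_sub,
    map_mul_of_mem_lieElements hδ_mul hu v (lieElements_le_positivePart hv),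
    map_mul_of_mem_lieElements hδ_mul hv u (lieElements_le_positivePart hu),
    Ring.lie_def, Ring.lie_def]
  abel

theorem map_eq_euler_of_mem_lieElements (hδ_gen : ∀ x : X, δ (ι R x) = ι R x)
    (hδ_mul : IsLeftBracketing R X δ)
    {u : FreeAlgebra R X} (hu : u ∈ lieElements R X) : δ u = euler u := by
  induction hu using LieSubalgebra.lieSpan_induction with
  | mem _ h => obtain ⟨x, rfl⟩ := h; rw [hδ_gen, euler_ι]
  | zero => simp
  | add u v _ _ hu hv => rw [map_add, map_add, hu, hv]
  | smul r u _ hu => rw [map_smul, map_smul, hu]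
  | lie u v huL hvL hu hv => rw [map_lie_of_mem_lieElements hδ_mul huL hvL, euler_lie, hu, hv]

theorem map_mem_lieElements (hδ_gen : ∀ x : X, δ (ι R x) = ι R x)
    (hδ_mul : IsLeftBracketing R X δ)
    {w : FreeAlgebra R X} (hw : w ∈ positivePart R X) : δ w ∈ lieElements R X := by
  suffices ∀ m : ℕ, generatorSpan R X ^ (m + 1) ≤ (lieElements R X).toSubmodule.comap δ from
    iSup_le this hw
  intro m
  induction m with
  | zero =>
    rw [zero_add, pow_one]
    intro p hp
    rw [mem_comap, map_eq_self_of_mem_generatorSpan hδ_gen hp]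
    exact generatorSpan_le_lieElements hp
  | succ m ih =>
    rw [pow_succ']
    refine mul_le.2 fun p hp q hq ↦ ?_
    have hpL := generatorSpan_le_lieElements hp
    have hq' := pow_le_positivePart m.succ_ne_zero hq
    rw [mem_comap, map_mul_of_mem_lieElements hδ_mul hpL q hq', ← Ring.lie_def]
    exact (lieElements R X).lie_mem hpL (ih hq)

end

end FreeAlgebra

theorem dynkin_specht_wever_general (X : Type*)
    (P : Submodule ℚ (FreeAlgebra ℚ X))
    (hP : P = Submodule.span ℚ (Set.range (FreeAlgebra.ι ℚ (X := X))))
    (δ : FreeAlgebra ℚ X →ₗ[ℚ] FreeAlgebra ℚ X)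
    (hδ_gen : ∀ x : X, δ (FreeAlgebra.ι ℚ x) = FreeAlgebra.ι ℚ x)
    (hδ_mul : ∀ x : X, ∀ w ∈ (⨆ m : ℕ, P ^ (m + 1)),
      δ (FreeAlgebra.ι ℚ x * w)
        = FreeAlgebra.ι ℚ x * δ w - δ w * FreeAlgebra.ι ℚ x) :
    ∀ n : ℕ, 1 ≤ n → ∀ w ∈ P ^ n,
      (w ∈ LieSubalgebra.lieSpan ℚ (FreeAlgebra ℚ X) (Set.range (FreeAlgebra.ι ℚ (X := X)))
        ↔ δ w = (n : ℚ) • w) := by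
  subst hP
  intro n hn w hw
  constructor
  · intro hwL
    rw [FreeAlgebra.map_eq_euler_of_mem_lieElements hδ_gen hδ_mul hwL,
      FreeAlgebra.euler_of_mem_pow hw, Nat.cast_smul_eq_nsmul]
  · intro hδw
    have hn0 : (n : ℚ) ≠ 0 := Nat.cast_ne_zero.2 (by omega)
    have hwA := FreeAlgebra.pow_le_positivePart (by omega) hw
    rw [← inv_smul_smul₀ hn0 w, ← hδw]
    exact (FreeAlgebra.lieElements ℚ X).smul_mem _
      (FreeAlgebra.map_mem_lieElements hδ_gen hδ_mul hwA)

/-- The Dynkin–Specht–Wever criterion (Appendix B §5.1 of the paper, [Se] §4.4): in the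
free associative `ℚ`-algebra `R` on `X` (with the commutator bracket), let `P` be the span
of the generators and let `δ` be a linear map with `δ(1) = 0`, `δ(x) = x` for generators
`x`, and `δ(x·w) = ⁅x, δ(w)⁆` for generators `x` and `w` in the augmentation part
`∑_{m ≥ 1} Pᵐ`. Then a homogeneous element `w ∈ Pⁿ` (`n ≥ 1`) is a Lie element — i.e. lies
in the Lie subalgebra generated by the generators — if and only if `δ(w) = n·w`. -/
theorem dynkin_specht_wever (X : Type*)
    (P : Submodule ℚ (FreeAlgebra ℚ X))
    (hP : P = Submodule.span ℚ (Set.range (FreeAlgebra.ι ℚ (X := X))))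
    (δ : FreeAlgebra ℚ X →ₗ[ℚ] FreeAlgebra ℚ X)
    (hδ_one : δ 1 = 0)
    (hδ_gen : ∀ x : X, δ (FreeAlgebra.ι ℚ x) = FreeAlgebra.ι ℚ x)
    (hδ_mul : ∀ x : X, ∀ w ∈ (⨆ m : ℕ, P ^ (m + 1)),
      δ (FreeAlgebra.ι ℚ x * w)
        = FreeAlgebra.ι ℚ x * δ w - δ w * FreeAlgebra.ι ℚ x) :
    ∀ n : ℕ, 1 ≤ n → ∀ w ∈ P ^ n,
      (w ∈ LieSubalgebra.lieSpan ℚ (FreeAlgebra ℚ X) (Set.range (FreeAlgebra.ι ℚ (X := X)))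
        ↔ δ w = (n : ℚ) • w) :=
  dynkin_specht_wever_general X P hP δ hδ_gen hδ_mul
end
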